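/- arXiv:2302.06935 — 2 statements merged into one kernel-verified Lean document; each statement's English description precedes it below -/
import Mathlib

section
/- Fix an integer k ≥ 1, data a₁,…,a_k ∈ (0,∞), z₁,…,z_k ∈ {0,1}, and fix α > 0. Define N_i = z_i·1_{a_i < α} + (1-z_i)·1_{a_i > α} for i = 1,…,k, |N| = Σ_{i=1}^{k} N_i, and the scalar product Nᵀlog²(a/α) = Σ_{i=1}^{k} N_i·(log(a_i/α))². Then as β → 0, ℓ_k(z|a,(α,β)) = O( β^{|N|} · exp(-Nᵀlog²(a/α)/(2β²)) ), i.e. there exist C > 0 and β₀ > 0 such that ℓ_k(z|a,(α,β)) ≤ C·β^{|N|}·exp(-Nᵀlog²(a/α)/(2β²)) for all 0 < β < β₀. -/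
open MeasureTheory Real Filter Set

/-- The standard Gaussian cumulative distribution function. -/
noncomputable def Phi (x : ℝ) : ℝ :=
  (Real.sqrt (2 * Real.pi))⁻¹ * ∫ t in Set.Iic x, Real.exp (-t ^ 2 / 2)

/-- The likelihood of the log-normal (probit) fragility model. -/
noncomputable def lik (k : ℕ) (a : Fin k → ℝ) (z : Fin k → ℕ) (α β : ℝ) : ℝ :=
  ∏ i, Phi (Real.log (a i / α) / β) ^ (z i) *
    (1 - Phi (Real.log (a i / α) / β)) ^ (1 - z i)

/-!
Each factor of the likelihood is `Φ(x/β)` or `1 - Φ(x/β) = Φ(-x/β)` (or a power of one of them),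
with `x = log (aᵢ/α)`. A factor whose argument tends to `-∞` as `β → 0` is a Gaussian lower tail,
and the Mills-ratio bound `Φ(-y) ≤ exp(-y²/2) / (√(2π) y)` for `y > 0` turns it into
`β · exp(-x²/(2β²)) / (√(2π) |x|)`. These are exactly the factors counted by `N`; every other
factor is at most `1`. The resulting bound holds for every `β > 0`.
-/

lemma integrable_exp_neg_sq_div_two : Integrable (fun t : ℝ => exp (-t ^ 2 / 2)) :=
  (integrable_exp_neg_mul_sq (by norm_num : (0 : ℝ) < 1 / 2)).congr <|
    .of_forall fun t => by ring_nf

lemma integrable_mul_exp_neg_sq_div_two : Integrable (fun t : ℝ => t * exp (-t ^ 2 / 2)) :=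
  (integrable_mul_exp_neg_mul_sq (by norm_num : (0 : ℝ) < 1 / 2)).congr <|
    .of_forall fun t => by ring_nf

lemma integral_exp_neg_sq_div_two : ∫ t : ℝ, exp (-t ^ 2 / 2) = √(2 * π) := by
  have h := integral_gaussian (1 / 2)
  rw [show π / (1 / 2) = 2 * π by ring] at h
  rw [← h]
  congr 1 with t
  ring_nf

lemma hasDerivAt_neg_exp_neg_sq_div_two (t : ℝ) :
    HasDerivAt (fun s : ℝ => -exp (-s ^ 2 / 2)) (t * exp (-t ^ 2 / 2)) t := by
  have h : HasDerivAt (fun s : ℝ => -s ^ 2 / 2) (-t) t := by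
    refine ((hasDerivAt_pow 2 t).neg.div_const 2).congr_deriv ?_
    push_cast; ring
  exact h.exp.neg.congr_deriv (by ring)

lemma tendsto_exp_neg_sq_div_two_atTop : Tendsto (fun s : ℝ => exp (-s ^ 2 / 2)) atTop (nhds 0) :=
  tendsto_exp_atBot.comp <|
    (tendsto_neg_atTop_atBot.comp (tendsto_pow_atTop two_ne_zero)).atBot_div_const two_pos

lemma setIntegral_Ioi_mul_exp_neg_sq_div_two (x : ℝ) :
    ∫ t in Ioi x, t * exp (-t ^ 2 / 2) = exp (-x ^ 2 / 2) := by
  simpa using integral_Ioi_of_hasDerivAt_of_tendsto'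
    (fun t _ => hasDerivAt_neg_exp_neg_sq_div_two t)
    integrable_mul_exp_neg_sq_div_two.integrableOn tendsto_exp_neg_sq_div_two_atTop.neg

/-- Mills' ratio bound: on `(x, ∞)` the integrand is at most `t/x` times itself. -/
lemma setIntegral_Ioi_exp_neg_sq_div_two_le {x : ℝ} (hx : 0 < x) :
    ∫ t in Ioi x, exp (-t ^ 2 / 2) ≤ exp (-x ^ 2 / 2) / x := by
  calc ∫ t in Ioi x, exp (-t ^ 2 / 2)
      ≤ ∫ t in Ioi x, x⁻¹ * (t * exp (-t ^ 2 / 2)) := by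
        refine setIntegral_mono_on integrable_exp_neg_sq_div_two.integrableOn
          (integrable_mul_exp_neg_sq_div_two.integrableOn.const_mul _) measurableSet_Ioi
          fun t ht => ?_
        rw [← mul_assoc, inv_mul_eq_div]
        exact le_mul_of_one_le_left (exp_nonneg _) ((one_le_div hx).2 ht.le)
    _ = exp (-x ^ 2 / 2) / x := by
        rw [integral_const_mul, setIntegral_Ioi_mul_exp_neg_sq_div_two, inv_mul_eq_div]

lemma Phi_nonneg (x : ℝ) : 0 ≤ Phi x :=
  mul_nonneg (by positivity) (setIntegral_nonneg measurableSet_Iic fun _ _ => (exp_pos _).le)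

lemma Phi_neg_eq_setIntegral_Ioi (x : ℝ) :
    Phi (-x) = (√(2 * π))⁻¹ * ∫ t in Ioi x, exp (-t ^ 2 / 2) := by
  rw [Phi, ← integral_comp_neg_Ioi]
  simp only [neg_sq]

lemma Phi_neg (x : ℝ) : Phi (-x) = 1 - Phi x := by
  have hsplit := intervalIntegral.integral_Iic_add_Ioi (b := x) (μ := volume)
    integrable_exp_neg_sq_div_two.integrableOn integrable_exp_neg_sq_div_two.integrableOn
  rw [integral_exp_neg_sq_div_two] at hsplit
  have hpos : 0 < √(2 * π) := by positivity
  rw [Phi_neg_eq_setIntegral_Ioi, Phi, eq_sub_iff_add_eq, ← mul_add, add_comm, hsplit,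
    inv_mul_cancel₀ hpos.ne']

lemma Phi_le_one (x : ℝ) : Phi x ≤ 1 := by
  linarith [Phi_neg x, Phi_nonneg (-x)]

lemma Phi_neg_le {y : ℝ} (hy : 0 < y) : Phi (-y) ≤ exp (-y ^ 2 / 2) / (√(2 * π) * y) := by
  rw [Phi_neg_eq_setIntegral_Ioi, mul_comm (√(2 * π)), ← div_div, inv_mul_eq_div]
  gcongr
  exact setIntegral_Ioi_exp_neg_sq_div_two_le hy

lemma Phi_div_le {c β : ℝ} (hc : c < 0) (hβ : 0 < β) :
    Phi (c / β) ≤ (√(2 * π) * |c|)⁻¹ * β * exp (-c ^ 2 / (2 * β ^ 2)) := by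
  have hy : 0 < |c| / β := div_pos (abs_pos.2 hc.ne) hβ
  have hcβ : c / β = -(|c| / β) := by rw [abs_of_neg hc]; ring
  calc Phi (c / β) ≤ exp (-(|c| / β) ^ 2 / 2) / (√(2 * π) * (|c| / β)) := hcβ ▸ Phi_neg_le hy
    _ = (√(2 * π) * |c|)⁻¹ * β * exp (-c ^ 2 / (2 * β ^ 2)) := by
        rw [div_pow, sq_abs]
        field_simp

/-- The exponent `Nᵢ` of the paper, as a function of `x = log (aᵢ/α)` and `zᵢ`. -/
noncomputable def tailCount (x : ℝ) (z : ℕ) : ℕ :=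
  if x < 0 then z else if 0 < x then 1 - z else 0

lemma probit_factor_le (x : ℝ) (z : ℕ) {β : ℝ} (hβ : 0 < β) :
    Phi (x / β) ^ z * (1 - Phi (x / β)) ^ (1 - z)
      ≤ ((√(2 * π) * |x|)⁻¹ * β * exp (-x ^ 2 / (2 * β ^ 2))) ^ tailCount x z := by
  have hΦ := Phi_nonneg (x / β)
  have hΦ' := Phi_le_one (x / β)
  unfold tailCount
  split_ifs with hneg hpos
  · refine (mul_le_of_le_one_right (by positivity)
      (pow_le_one₀ (by linarith) (by linarith))).trans ?_
    exact pow_le_pow_left₀ hΦ (Phi_div_le hneg hβ) z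
  · refine (mul_le_of_le_one_left (pow_nonneg (by linarith) _) (pow_le_one₀ hΦ hΦ')).trans ?_
    have h := Phi_div_le (neg_lt_zero.2 hpos) hβ
    rw [neg_div, Phi_neg, abs_neg, neg_sq] at h
    exact pow_le_pow_left₀ (by linarith) h _
  · rw [pow_zero]
    exact mul_le_one₀ (pow_le_one₀ hΦ hΦ') (pow_nonneg (by linarith) _)
      (pow_le_one₀ (by linarith) (by linarith))

theorem stmt3_general (k : ℕ) (a : Fin k → ℝ) (ha : ∀ i, 0 < a i)
    (z : Fin k → ℕ) (α : ℝ) (hα : 0 < α)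
    (N : Fin k → ℕ)
    (hN : ∀ i, N i = if a i < α then z i else if α < a i then 1 - z i else 0) :
    ∃ C > (0 : ℝ), ∃ β₀ > (0 : ℝ), ∀ β : ℝ, 0 < β → β < β₀ →
      lik k a z α β ≤ C * β ^ (∑ i, N i) *
        Real.exp (-(∑ i, (N i : ℝ) * Real.log (a i / α) ^ 2) / (2 * β ^ 2)) := by
  set x : Fin k → ℝ := fun i => log (a i / α)
  set K : Fin k → ℝ := fun i => (√(2 * π) * |x i|)⁻¹
  have hNx : ∀ i, N i = tailCount (x i) (z i) := fun i => by
    have hpos : 0 < a i / α := div_pos (ha i) hα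
    simp only [hN i, tailCount, x, log_neg_iff hpos, log_pos_iff hpos.le, div_lt_one hα,
      one_lt_div hα]
  refine ⟨∏ i, K i ^ N i, Finset.prod_pos fun i _ => ?_, 1, one_pos, fun β hβ _ => ?_⟩
  · rcases eq_or_ne (x i) 0 with h | h
    · simp [hNx i, tailCount, h]
    · exact pow_pos (inv_pos.2 (mul_pos (by positivity) (abs_pos.2 h))) _
  calc lik k a z α β ≤ ∏ i, (K i * β * exp (-x i ^ 2 / (2 * β ^ 2))) ^ N i :=
        Finset.prod_le_prod (fun i _ => mul_nonneg (pow_nonneg (Phi_nonneg _) _)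
            (pow_nonneg (sub_nonneg.2 (Phi_le_one _)) _))
          fun i _ => hNx i ▸ probit_factor_le (x i) (z i) hβ
    _ = _ := by
        simp only [mul_pow, ← exp_nat_mul, Finset.prod_mul_distrib, ← exp_sum,
          Finset.prod_pow_eq_pow_sum, neg_div, Finset.sum_div, ← Finset.sum_neg_distrib]
        congr 3 with i
        ring

/-- Fix `k ≥ 1`, data `aᵢ ∈ (0,∞)`, `zᵢ ∈ {0,1}` and `α > 0`. With
`Nᵢ = zᵢ·1_{aᵢ<α} + (1-zᵢ)·1_{aᵢ>α}`, as `β → 0` one has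
`ℓ_k(z|a,(α,β)) = O(β^{|N|} exp(-Nᵀlog²(a/α)/(2β²)))`. -/
theorem stmt3 (k : ℕ) (hk : 1 ≤ k) (a : Fin k → ℝ) (ha : ∀ i, 0 < a i)
    (z : Fin k → ℕ) (hz : ∀ i, z i = 0 ∨ z i = 1) (α : ℝ) (hα : 0 < α)
    (N : Fin k → ℕ)
    (hN : ∀ i, N i = if a i < α then z i else if α < a i then 1 - z i else 0) :
    ∃ C > (0 : ℝ), ∃ β₀ > (0 : ℝ), ∀ β : ℝ, 0 < β → β < β₀ →
      lik k a z α β ≤ C * β ^ (∑ i, N i) *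
        Real.exp (-(∑ i, (N i : ℝ) * Real.log (a i / α) ^ 2) / (2 * β ^ 2)) :=
  stmt3_general k a ha z α hα N hN
end

section
/- In the latent-variable model of Straub and Der Kiureghian with J substations, observed intensities â₁,…,â_J ∈ (0,∞), failure indicators z_{ij} ∈ {0,1}, noise variance σ_ε² > 0, parameter θ = (α,β,ρ) with α,β > 0, ρ ∈ (0,1), prior hyperparameters μ ∈ ℝ, σ > 0, and prior π_SK(θ) = (βα)^{-1}·exp(-(log α − μ)²/(2σ²))·1_{0≤ρ≤1}, the unnormalized posterior p(θ|z,â) = ℓ_J(z|â,θ)·π_SK(θ) satisfies, for fixed α and ρ: there exists a constant C > 0 such that p((α,β,ρ)|z,â) ~ C/β as β → ∞. Consequently ∫_1^∞ p((α,β,ρ)|z,â) dβ = +∞, so the posterior is improper. -/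
open MeasureTheory Real Filter Set

/-- `Ψ^z(γ) = Φ(γ)^z (1-Φ(γ))^{1-z}` for `z ∈ {0,1}`. -/
noncomputable def Psi (z : ℕ) (γ : ℝ) : ℝ := Phi γ ^ z * (1 - Phi γ) ^ (1 - z)

/-- The likelihood in the latent-variable model of Straub and Der Kiureghian:
`ℓ_J(z|â,θ) = ∏_j ∫_ℝ ∏_i Ψ^{z_{ij}}((x − log α)/(β√(1−ρ))) ·
(2π(σ_ε² + ρβ²))^{-1/2} exp(-(x − log â_j)²/(2(σ_ε² + ρβ²))) dx`. -/
noncomputable def likSK (J : ℕ) (I : Fin J → ℕ) (ahat : Fin J → ℝ)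
    (z : (j : Fin J) → Fin (I j) → ℕ) (σε α β ρ : ℝ) : ℝ :=
  ∏ j, ∫ x : ℝ,
    (∏ i, Psi (z j i) ((x - Real.log α) / (β * Real.sqrt (1 - ρ)))) *
      ((Real.sqrt (2 * Real.pi * (σε ^ 2 + ρ * β ^ 2)))⁻¹ *
        Real.exp (-(x - Real.log (ahat j)) ^ 2 / (2 * (σε ^ 2 + ρ * β ^ 2))))

/-- The prior of Straub and Der Kiureghian on `θ = (α,β,ρ)`:
`π_SK(θ) = (βα)⁻¹ exp(-(log α − μ)²/(2σ²))·1_{0≤ρ≤1}`. -/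
noncomputable def piSK3 (μ σ α β ρ : ℝ) : ℝ :=
  (β * α)⁻¹ * Real.exp (-(Real.log α - μ) ^ 2 / (2 * σ ^ 2)) *
    (if 0 ≤ ρ ∧ ρ ≤ 1 then 1 else 0)

/-- The unnormalized posterior `p(θ|z,â) = ℓ_J(z|â,θ)·π_SK(θ)` in the latent-variable
model of Straub and Der Kiureghian. -/
noncomputable def postSK (J : ℕ) (I : Fin J → ℕ) (ahat : Fin J → ℝ)
    (z : (j : Fin J) → Fin (I j) → ℕ) (σε μ σ α β ρ : ℝ) : ℝ :=
  likSK J I ahat z σε α β ρ * piSK3 μ σ α β ρ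

/-! After the substitution `x = log âⱼ + √(σ_ε² + ρβ²) y`, each factor of the likelihood is the
standard Gaussian expectation of `∏ᵢ Ψ^{zᵢⱼ}` evaluated at
`(log âⱼ - log α + √(σ_ε² + ρβ²) y) / (β √(1-ρ))`, which tends to `√ρ / √(1-ρ) · y` as `β → ∞`.
Since `Ψ` takes values in `(0, 1]`, dominated convergence shows that the likelihood tends to a
positive constant, so the posterior behaves like a constant times `1/β`, whose integral over
`(1, ∞)` diverges. -/

open Topology ProbabilityTheory NNReal

lemma Phi_eq_setIntegral (x : ℝ) : Phi x = ∫ t in Iic x, gaussianPDFReal 0 1 t := by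
  simp [Phi, gaussianPDFReal, integral_const_mul]

lemma Phi_eq_measureReal (x : ℝ) : Phi x = (gaussianReal 0 1).real (Iic x) := by
  rw [Phi_eq_setIntegral, measureReal_def, gaussianReal_apply_eq_integral _ one_ne_zero,
    ENNReal.toReal_ofReal
      (setIntegral_nonneg measurableSet_Iic fun t _ ↦ gaussianPDFReal_nonneg _ _ t)]

lemma measureReal_gaussianReal_pos (m : ℝ) {v : ℝ≥0} (hv : v ≠ 0) {s : Set ℝ}
    (hs : volume s ≠ 0) : 0 < (gaussianReal m v).real s :=
  ENNReal.toReal_pos (fun h ↦ hs (gaussianReal_absolutelyContinuous' m hv h)) (measure_ne_top _ s)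

lemma Phi_pos (x : ℝ) : 0 < Phi x := by
  rw [Phi_eq_measureReal]
  exact measureReal_gaussianReal_pos 0 one_ne_zero (by simp)

lemma Phi_lt_one (x : ℝ) : Phi x < 1 := by
  have h : 0 < (gaussianReal 0 1).real (Iic x)ᶜ :=
    measureReal_gaussianReal_pos 0 one_ne_zero (by simp)
  rw [probReal_compl_eq_one_sub measurableSet_Iic] at h
  rw [Phi_eq_measureReal]
  linarith

lemma continuous_Phi : Continuous Phi := by
  have hp : Integrable (gaussianPDFReal 0 1) := integrable_gaussianPDFReal 0 1
  have h : Phi = fun x ↦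
      (∫ t in Iic 0, gaussianPDFReal 0 1 t) + ∫ t in (0 : ℝ)..x, gaussianPDFReal 0 1 t := by
    funext x
    rw [Phi_eq_setIntegral, ← intervalIntegral.integral_Iic_sub_Iic hp.integrableOn hp.integrableOn]
    ring
  rw [h]
  exact continuous_const.add
    (intervalIntegral.continuous_primitive (fun _ _ ↦ hp.intervalIntegrable) 0)

lemma Psi_pos (z : ℕ) (γ : ℝ) : 0 < Psi z γ :=
  mul_pos (pow_pos (Phi_pos γ) _) (pow_pos (sub_pos.mpr (Phi_lt_one γ)) _)

lemma Psi_le_one (z : ℕ) (γ : ℝ) : Psi z γ ≤ 1 :=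
  mul_le_one₀ (pow_le_one₀ (Phi_pos γ).le (Phi_lt_one γ).le)
    (pow_nonneg (sub_pos.mpr (Phi_lt_one γ)).le _)
    (pow_le_one₀ (sub_pos.mpr (Phi_lt_one γ)).le (sub_le_self _ (Phi_pos γ).le))

lemma continuous_Psi (z : ℕ) : Continuous (Psi z) :=
  (continuous_Phi.pow z).mul ((continuous_const.sub continuous_Phi).pow (1 - z))

lemma integral_gaussianReal_eq_integral_std {E : Type*} [NormedAddCommGroup E] [NormedSpace ℝ E]
    {f : ℝ → E} (hf : StronglyMeasurable f) (m : ℝ) (v : ℝ≥0) :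
    ∫ x, f x ∂gaussianReal m v = ∫ y, f (m + √v * y) ∂gaussianReal 0 1 := by
  have hmap : (gaussianReal 0 1).map (fun y ↦ m + √v * y) = gaussianReal m v := by
    change (gaussianReal 0 1).map ((m + ·) ∘ (√v * ·)) = _
    rw [← Measure.map_map (measurable_const_add m) (measurable_const_mul _),
      gaussianReal_map_const_mul, gaussianReal_map_const_add]
    congr 1
    · ring
    · ext; simp
  rw [← hmap, integral_map (by fun_prop) hf.aestronglyMeasurable]

lemma tendsto_add_sqrt_mul_div_mul (e ρ m ℓ d y : ℝ) :
    Tendsto (fun β ↦ (m + √(e + ρ * β ^ 2) * y - ℓ) / (β * d)) atTop (𝓝 (√ρ / d * y)) := by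
  have hsqrt : Tendsto (fun β : ℝ ↦ √(e / β ^ 2 + ρ)) atTop (𝓝 (√ρ)) := by
    have h : Tendsto (fun β : ℝ ↦ e / β ^ 2 + ρ) atTop (𝓝 (e * 0 + ρ)) :=
      ((tendsto_pow_atTop two_ne_zero).inv_tendsto_atTop.const_mul e).add_const ρ
    rw [mul_zero, zero_add] at h
    exact (continuous_sqrt.tendsto ρ).comp h
  have hlim := (tendsto_inv_atTop_zero.const_mul ((m - ℓ) / d)).add (hsqrt.mul_const (y / d))
  rw [mul_zero, zero_add] at hlim
  rw [show √ρ / d * y = √ρ * (y / d) by ring]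
  refine hlim.congr' ?_
  filter_upwards [eventually_gt_atTop 0] with β hβ
  have hsplit : √(e + ρ * β ^ 2) = √(e / β ^ 2 + ρ) * β := by
    rw [← sqrt_sq hβ.le, ← sqrt_mul' _ (sq_nonneg β), sqrt_sq hβ.le]
    congr 1
    field_simp
  rw [hsplit]
  field_simp
  ring

lemma tendsto_integral_comp_mul_gaussianPDF {g : ℝ → ℝ} (hg : Continuous g) {C : ℝ}
    (hC : ∀ x, ‖g x‖ ≤ C) (e ℓ m d : ℝ) {ρ : ℝ} (hρ : 0 < ρ) :
    Tendsto (fun β ↦ ∫ x, g ((x - ℓ) / (β * d)) *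
        ((√(2 * π * (e + ρ * β ^ 2)))⁻¹ * exp (-(x - m) ^ 2 / (2 * (e + ρ * β ^ 2)))))
      atTop (𝓝 (∫ y, g (√ρ / d * y) ∂gaussianReal 0 1)) := by
  have hvar : ∀ᶠ β : ℝ in atTop, 0 < e + ρ * β ^ 2 :=
    (tendsto_atTop_add_const_left _ e
      ((tendsto_pow_atTop two_ne_zero).const_mul_atTop hρ)).eventually_gt_atTop 0
  have hstd : ∀ᶠ β : ℝ in atTop,
      ∫ y, g ((m + √(e + ρ * β ^ 2) * y - ℓ) / (β * d)) ∂gaussianReal 0 1 =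
      ∫ x, g ((x - ℓ) / (β * d)) *
        ((√(2 * π * (e + ρ * β ^ 2)))⁻¹ * exp (-(x - m) ^ 2 / (2 * (e + ρ * β ^ 2)))) := by
    filter_upwards [hvar] with β hβ
    set v : ℝ≥0 := ⟨e + ρ * β ^ 2, hβ.le⟩
    have hv : v ≠ 0 := ne_of_gt hβ
    have h := integral_gaussianReal_eq_integral_std (f := fun x ↦ g ((x - ℓ) / (β * d)))
      (hg.comp (by fun_prop)).stronglyMeasurable m v
    rw [integral_gaussianReal_eq_integral_smul hv] at h
    exact h.symm.trans (integral_congr_ae (ae_of_all _ fun x ↦ mul_comm _ _))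
  refine Tendsto.congr' hstd (tendsto_integral_filter_of_norm_le_const ?_ ⟨C, ?_⟩ ?_)
  · exact Eventually.of_forall fun β ↦ by fun_prop
  · exact Eventually.of_forall fun β ↦ ae_of_all _ fun y ↦ hC _
  · exact ae_of_all _ fun y ↦ (hg.tendsto _).comp (tendsto_add_sqrt_mul_div_mul e ρ m ℓ d y)

lemma integral_pos_of_forall_pos {α : Type*} [MeasurableSpace α] {μ : Measure α} [NeZero μ]
    {f : α → ℝ} (hf : ∀ x, 0 < f x) (hfi : Integrable f μ) : 0 < ∫ x, f x ∂μ := by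
  rw [integral_pos_iff_support_of_nonneg (fun x ↦ (hf x).le) hfi]
  suffices Function.support f = univ by simp [this, NeZero.ne μ]
  exact eq_univ_of_forall fun x ↦ (hf x).ne'

lemma norm_prod_Psi_le_one {ι : Type*} (s : Finset ι) (z : ι → ℕ) (γ : ℝ) :
    ‖∏ i ∈ s, Psi (z i) γ‖ ≤ 1 := by
  rw [Real.norm_of_nonneg (Finset.prod_nonneg fun i _ ↦ (Psi_pos _ γ).le)]
  exact Finset.prod_le_one (fun i _ ↦ (Psi_pos _ γ).le) fun i _ ↦ Psi_le_one _ γ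

lemma exists_tendsto_likSK (J : ℕ) (I : Fin J → ℕ) (ahat : Fin J → ℝ)
    (z : (j : Fin J) → Fin (I j) → ℕ) (σε α : ℝ) {ρ : ℝ} (hρ : 0 < ρ) :
    ∃ L > 0, Tendsto (fun β ↦ likSK J I ahat z σε α β ρ) atTop (𝓝 L) := by
  have hcont : ∀ j, Continuous fun γ ↦ ∏ i, Psi (z j i) γ :=
    fun j ↦ continuous_finsetProd _ fun i _ ↦ continuous_Psi _
  refine ⟨∏ j, ∫ y, ∏ i, Psi (z j i) (√ρ / √(1 - ρ) * y) ∂gaussianReal 0 1,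
    Finset.prod_pos fun j _ ↦ ?_, tendsto_finsetProd _ fun j _ ↦
      tendsto_integral_comp_mul_gaussianPDF (hcont j) (norm_prod_Psi_le_one _ _)
        (σε ^ 2) (log α) (log (ahat j)) (√(1 - ρ)) hρ⟩
  refine integral_pos_of_forall_pos (fun y ↦ Finset.prod_pos fun i _ ↦ Psi_pos _ _) ?_
  exact .of_bound ((hcont j).comp (continuous_const_mul _)).aestronglyMeasurable 1
    (ae_of_all _ fun y ↦ norm_prod_Psi_le_one _ _ _)

lemma lintegral_Ioi_ofReal_inv_eq_top {b : ℝ} (hb : 0 ≤ b) :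
    ∫⁻ x in Ioi b, ENNReal.ofReal x⁻¹ = ⊤ := by
  by_contra h
  refine not_integrableOn_Ioi_inv ((lintegral_ofReal_ne_top_iff_integrable
    measurable_inv.aestronglyMeasurable ?_).mp h)
  filter_upwards [ae_restrict_mem measurableSet_Ioi] with x hx
  exact inv_nonneg.mpr (hb.trans hx.le)

lemma lintegral_Ioi_ofReal_eq_top_of_tendsto_div {f : ℝ → ℝ} {C : ℝ} (hC : 0 < C)
    (hf : Tendsto (fun x ↦ f x / (C / x)) atTop (𝓝 1)) (a : ℝ) :
    ∫⁻ x in Ioi a, ENNReal.ofReal (f x) = ⊤ := by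
  obtain ⟨M, hM⟩ := ((hf.eventually (eventually_ge_nhds one_half_lt_one)).and
    (eventually_gt_atTop 0)).exists_forall_of_atTop
  set b := max a M
  have hlower : ∀ x ∈ Ioi b,
      ENNReal.ofReal (C / 2) * ENNReal.ofReal x⁻¹ ≤ ENNReal.ofReal (f x) := by
    intro x hx
    obtain ⟨hhalf, hx0⟩ := hM x ((le_max_right a M).trans hx.le)
    rw [← ENNReal.ofReal_mul (by positivity)]
    refine ENNReal.ofReal_le_ofReal ?_
    rw [le_div_iff₀ (by positivity)] at hhalf
    linarith [show C / 2 * x⁻¹ = 1 / 2 * (C / x) by ring]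
  refine eq_top_iff.mpr ?_
  calc ⊤ = ∫⁻ x in Ioi b, ENNReal.ofReal (C / 2) * ENNReal.ofReal x⁻¹ := by
        rw [lintegral_const_mul _ measurable_inv.ennreal_ofReal,
          lintegral_Ioi_ofReal_inv_eq_top ((hM M le_rfl).2.le.trans (le_max_right a M)),
          ENNReal.mul_top (by simpa using hC)]
    _ ≤ ∫⁻ x in Ioi b, ENNReal.ofReal (f x) := setLIntegral_mono' measurableSet_Ioi hlower
    _ ≤ ∫⁻ x in Ioi a, ENNReal.ofReal (f x) := lintegral_mono_set (Ioi_subset_Ioi (le_max_left a M))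

theorem stmt18_general (J : ℕ) (I : Fin J → ℕ) (ahat : Fin J → ℝ)
    (z : (j : Fin J) → Fin (I j) → ℕ)
    (σε : ℝ) (μ σ : ℝ)
    (α : ℝ) (hα : 0 < α) (ρ : ℝ) (hρ : ρ ∈ Set.Ioo (0 : ℝ) 1) :
    (∃ C > (0 : ℝ), Filter.Tendsto
      (fun β : ℝ => postSK J I ahat z σε μ σ α β ρ / (C / β)) Filter.atTop (nhds 1)) ∧
    ∫⁻ β in Set.Ioi (1 : ℝ),
      ENNReal.ofReal (postSK J I ahat z σε μ σ α β ρ) = ⊤ := by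
  obtain ⟨L, hL, hlik⟩ := exists_tendsto_likSK J I ahat z σε α hρ.1
  set C := L * (α⁻¹ * exp (-(log α - μ) ^ 2 / (2 * σ ^ 2)))
  have hC : 0 < C := by positivity
  have hasymp : Tendsto (fun β ↦ postSK J I ahat z σε μ σ α β ρ / (C / β)) atTop (𝓝 1) := by
    have h := hlik.div_const L
    rw [div_self hL.ne'] at h
    refine h.congr' ?_
    filter_upwards [eventually_ne_atTop 0] with β hβ
    rw [postSK, piSK3, if_pos ⟨hρ.1.le, hρ.2.le⟩]
    simp only [C]
    field_simp
  exact ⟨⟨C, hC, hasymp⟩, lintegral_Ioi_ofReal_eq_top_of_tendsto_div hC hasymp 1⟩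

/-- For fixed `α` and `ρ`, there is `C > 0` with `p((α,β,ρ)|z,â) ~ C/β` as `β → ∞`;
consequently `∫_1^∞ p((α,β,ρ)|z,â) dβ = +∞`, so the posterior is improper. -/
theorem stmt18 (J : ℕ) (I : Fin J → ℕ) (ahat : Fin J → ℝ) (hahat : ∀ j, 0 < ahat j)
    (z : (j : Fin J) → Fin (I j) → ℕ) (hz : ∀ j i, z j i = 0 ∨ z j i = 1)
    (σε : ℝ) (hσε : 0 < σε) (μ σ : ℝ) (hσ : 0 < σ)
    (α : ℝ) (hα : 0 < α) (ρ : ℝ) (hρ : ρ ∈ Set.Ioo (0 : ℝ) 1) :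
    (∃ C > (0 : ℝ), Filter.Tendsto
      (fun β : ℝ => postSK J I ahat z σε μ σ α β ρ / (C / β)) Filter.atTop (nhds 1)) ∧
    ∫⁻ β in Set.Ioi (1 : ℝ),
      ENNReal.ofReal (postSK J I ahat z σε μ σ α β ρ) = ⊤ :=
  stmt18_general J I ahat z σε μ σ α hα ρ hρ
end
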